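/- (Operator-norm speed limit for the swap gate.) Let N ≥ 2, θ ∈ ℝ, V an N×N unitary complex matrix, and let H be a Hermitian N×N matrix with smallest eigenvalue E₀ and largest eigenvalue E_max. Suppose T > 0 satisfies (−i T) • H = (π/2) • (V * (Ô(θ) ⊕ 0_{N−2}) * V†) (so exp(−i T H) equals the swap gate O_V = V(Ô(θ) ⊕ I_{N−2})V†). Then E_max − E₀ = π/T, i.e. T = π / (E_max − E₀). -/

import Mathlib

/-!
With `c = π / (2T)` and `B = V (Ô(θ) ⊕ 0) V†`, the hypothesis says `H = i c B`. Since
`Ô(θ)² = -1` we get `B³ = -B`, hence `H³ = c² H`, so every eigenvalue of `H` lies in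
`{0, c, -c}`. The eigenvalues sum to `tr H = i c · tr Ô(θ) = 0` and do not all vanish
(`H ≠ 0`), so both `c` and `-c` occur, and the spread is `2c = π / T`.
-/

open Matrix Complex

/-- The 2×2 matrix `Ô(θ) = !![0, i·e^{−iθ}; i·e^{iθ}, 0]`. -/
noncomputable def Ohat (θ : ℝ) : Matrix (Fin 2) (Fin 2) ℂ :=
  !![0, Complex.I * Complex.exp (-(Complex.I * (θ : ℂ)));
     Complex.I * Complex.exp (Complex.I * (θ : ℂ)), 0]

namespace Matrix

section Conjugation

variable {n R : Type*} [Fintype n] [DecidableEq n] [CommSemiring R] [Star R] {V : Matrix n n R}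

lemma mul_mul_conjTranspose_mul (hV : Vᴴ * V = 1) (A B : Matrix n n R) :
    V * A * Vᴴ * (V * B * Vᴴ) = V * (A * B) * Vᴴ := by
  simp only [Matrix.mul_assoc, ← Matrix.mul_assoc Vᴴ V, hV, Matrix.one_mul]

lemma trace_mul_mul_conjTranspose (hV : Vᴴ * V = 1) (A : Matrix n n R) :
    (V * A * Vᴴ).trace = A.trace := by
  rw [trace_mul_cycle, hV, Matrix.one_mul]

lemma mul_mul_conjTranspose_ne_zero (hV : Vᴴ * V = 1) {A : Matrix n n R} (hA : A ≠ 0) :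
    V * A * Vᴴ ≠ 0 := by
  intro h
  apply hA
  calc A = Vᴴ * V * A * (Vᴴ * V) := by rw [hV, Matrix.one_mul, Matrix.mul_one]
    _ = Vᴴ * (V * A * Vᴴ) * V := by simp only [Matrix.mul_assoc]
    _ = 0 := by rw [h, Matrix.mul_zero, Matrix.zero_mul]

end Conjugation

section Padding

variable {m n p R : Type*}

def padZero [Zero R] (e : m ⊕ n ≃ p) (A : Matrix m m R) : Matrix p p R :=
  reindex e e (fromBlocks A 0 0 0)

lemma padZero_mul [Fintype m] [Fintype n] [Fintype p] [NonUnitalNonAssocSemiring R]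
    (e : m ⊕ n ≃ p) (A B : Matrix m m R) :
    padZero e A * padZero e B = padZero e (A * B) := by
  simp [padZero, submatrix_mul_equiv, fromBlocks_multiply]

lemma padZero_neg [NegZeroClass R] (e : m ⊕ n ≃ p) (A : Matrix m m R) :
    padZero e (-A) = -padZero e A := by
  ext i j
  simp only [padZero, reindex_apply, submatrix_apply, neg_apply]
  rcases e.symm i with i | i <;> rcases e.symm j with j | j <;> simp

lemma trace_padZero [Fintype m] [Fintype n] [Fintype p] [AddCommMonoid R] (e : m ⊕ n ≃ p)
    (A : Matrix m m R) :
    (padZero e A).trace = A.trace := by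
  simp only [padZero, trace, reindex_apply, diag_apply, submatrix_apply]
  rw [Equiv.sum_comp e.symm (fun i => fromBlocks A 0 0 0 i i), Fintype.sum_sum_type]
  simp

lemma padZero_ne_zero [Zero R] (e : m ⊕ n ≃ p) {A : Matrix m m R} (hA : A ≠ 0) :
    padZero e A ≠ 0 := by
  intro h
  apply hA
  have h₁₁ := congrArg (fun M => toBlocks₁₁ ((reindex e e).symm M)) h
  simp only [padZero, Equiv.symm_apply_apply, toBlocks_fromBlocks₁₁] at h₁₁
  exact h₁₁

end Padding

end Matrix

lemma Ohat_mul_self (θ : ℝ) : Ohat θ * Ohat θ = -1 := by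
  have h : I * exp (-(I * θ)) * (I * exp (I * θ)) = -1 := by
    rw [mul_mul_mul_comm, ← exp_add, neg_add_cancel, exp_zero, I_mul_I, mul_one]
  rw [Ohat, mul_fin_two, mul_comm (I * exp (I * θ)) (I * exp (-(I * θ))), h]
  ext i j
  fin_cases i <;> fin_cases j <;> simp

lemma trace_Ohat (θ : ℝ) : (Ohat θ).trace = 0 := by
  simp [Ohat, trace_fin_two]

lemma Ohat_ne_zero (θ : ℝ) : Ohat θ ≠ 0 := by
  intro h
  simpa [h] using Ohat_mul_self θ

section ComplexScalars

variable {M : Type*} [AddCommGroup M] [Module ℂ M]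

lemma eq_I_mul_div_smul_of_neg_I_mul_smul_eq {T a : ℝ} (hT : T ≠ 0) {x y : M}
    (h : (-I * T) • x = a • y) : x = (I * (a / T : ℝ)) • y := by
  have hT' : (T : ℂ) ≠ 0 := by exact_mod_cast hT
  apply smul_right_injective M (mul_ne_zero (neg_ne_zero.mpr I_ne_zero) hT')
  dsimp only
  rw [h, smul_smul, ← Complex.coe_smul]
  congr 1
  push_cast
  field_simp
  linear_combination (a : ℂ) * I_sq

lemma I_mul_smul_cube {A : Type*} [Ring A] [Algebra ℂ A] {b : A} (hb : b * b * b = -b) (c : ℝ) :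
    (I * c) • b * ((I * c) • b) * ((I * c) • b) = ((c : ℂ) ^ 2) • ((I * c) • b) := by
  simp only [smul_mul_assoc, mul_smul_comm, smul_smul, hb, smul_neg, ← neg_smul]
  congr 1
  linear_combination (-(c : ℂ) ^ 3 * I) * I_sq

end ComplexScalars

namespace Matrix.IsHermitian

variable {n 𝕜 : Type*} [Fintype n] [DecidableEq n] [RCLike 𝕜] {A : Matrix n n 𝕜}
  (hA : A.IsHermitian)

lemma eigenvalues_mem_of_mul_self_mul_self_eq_smul {c : ℝ}
    (h : A * A * A = ((c : 𝕜) ^ 2) • A) (i : n) : hA.eigenvalues i = 0 ∨ hA.eigenvalues i = c ∨ hA.eigenvalues i = -c := by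
  set μ := hA.eigenvalues i
  set v := ⇑(hA.eigenvectorBasis i)
  have hv : A *ᵥ v = (μ : 𝕜) • v := by
    rw [hA.mulVec_eigenvectorBasis i, RCLike.real_smul_eq_coe_smul (K := 𝕜)]
  have hv0 : v ≠ 0 := (WithLp.ofLp_eq_zero 2).ne.2 (hA.eigenvectorBasis.orthonormal.ne_zero i)
  have hsmul : ((μ ^ 3 : ℝ) : 𝕜) • v = ((c ^ 2 * μ : ℝ) : 𝕜) • v := by
    have := congrArg (· *ᵥ v) h
    simp only [← mulVec_mulVec, hv, mulVec_smul, smul_mulVec, smul_smul] at this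
    push_cast
    rw [← this]
    ring_nf
  have hcube : μ ^ 3 = c ^ 2 * μ := by exact_mod_cast smul_left_injective 𝕜 hv0 hsmul
  have hfactor : μ * ((μ - c) * (μ + c)) = 0 := by linear_combination hcube
  rcases mul_eq_zero.mp hfactor with h0 | h
  · exact .inl h0
  rcases mul_eq_zero.mp h with h | h
  · exact .inr (.inl (sub_eq_zero.mp h))
  · exact .inr (.inr (eq_neg_of_add_eq_zero_left h))

theorem iSup_eigenvalues_sub_iInf_eigenvalues_of_mul_self_mul_self_eq_smul {c : ℝ}
    (hc : 0 ≤ c) (h : A * A * A = ((c : 𝕜) ^ 2) • A) (htr : A.trace = 0) (hA0 : A ≠ 0) :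
    (⨆ i, hA.eigenvalues i) - (⨅ i, hA.eigenvalues i) = 2 * c := by
  set μ := hA.eigenvalues
  have hmem := hA.eigenvalues_mem_of_mul_self_mul_self_eq_smul h
  have hsum : ∑ i, μ i = 0 := by
    exact_mod_cast hA.trace_eq_sum_eigenvalues.symm.trans htr
  have hne : ∃ i ∈ Finset.univ, μ i ≠ 0 := by
    by_contra! hall
    exact hA0 (hA.eigenvalues_eq_zero_iff.mp (funext fun i => hall i (Finset.mem_univ i)))
  obtain ⟨i, -, hi⟩ := Finset.exists_pos_of_sum_zero_of_exists_nonzero μ hsum hne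
  obtain ⟨j, -, hj⟩ := Finset.exists_pos_of_sum_zero_of_exists_nonzero (s := Finset.univ)
    (-μ) (by simp [Finset.sum_neg_distrib, hsum]) (by simpa using hne)
  have : Nonempty n := ⟨i⟩
  have hμi : μ i = c := by rcases hmem i with h | h | h <;> linarith
  have hμj : μ j = -c := by rcases hmem j with h | h | h <;> simp at hj <;> linarith
  have hsup : ⨆ k, μ k = c :=
    le_antisymm (ciSup_le fun k => by rcases hmem k with h | h | h <;> linarith)
      (hμi ▸ le_ciSup (Finite.bddAbove_range μ) i)
  have hinf : ⨅ k, μ k = -c :=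
    le_antisymm (hμj ▸ ciInf_le (Finite.bddBelow_range μ) j)
      (le_ciInf fun k => by rcases hmem k with h | h | h <;> linarith)
  rw [hsup, hinf]
  ring

end Matrix.IsHermitian

/-- Operator-norm speed limit for the swap gate: if a time-independent Hermitian
Hamiltonian `H`, with smallest eigenvalue `E₀` and largest eigenvalue `E_max`,
implements the swap gate `O_V = V (Ô(θ) ⊕ I) V†` at time `T > 0` (i.e. `(−iT)•H` is
the given logarithm of `O_V`), then `E_max − E₀ = π/T`, i.e. `T = π/(E_max − E₀)`. -/
theorem opNorm_speed_limit_swap_gate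
    {N : ℕ} (hN : 2 ≤ N) (θ : ℝ) (V : Matrix (Fin N) (Fin N) ℂ) (hV : V * Vᴴ = 1)
    (H : Matrix (Fin N) (Fin N) ℂ) (hH : H.IsHermitian)
    (T : ℝ) (hT : 0 < T)
    (hlog : ((-Complex.I) * (T : ℂ)) • H = (Real.pi / 2 : ℝ) •
        (V * (Matrix.reindex (finSumFinEquiv.trans (finCongr (Nat.add_sub_cancel' hN)))
                (finSumFinEquiv.trans (finCongr (Nat.add_sub_cancel' hN)))
                (Matrix.fromBlocks (Ohat θ) 0 0 (0 : Matrix (Fin (N - 2)) (Fin (N - 2)) ℂ))) * Vᴴ)) :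
    (⨆ i, hH.eigenvalues i) - (⨅ i, hH.eigenvalues i) = Real.pi / T := by
  set B := V * padZero (finSumFinEquiv.trans (finCongr (Nat.add_sub_cancel' hN))) (Ohat θ) * Vᴴ
  set c := Real.pi / 2 / T with hc
  have hVV : Vᴴ * V = 1 := mul_eq_one_comm.mp hV
  have hB3 : B * B * B = -B := by
    rw [mul_mul_conjTranspose_mul hVV, mul_mul_conjTranspose_mul hVV, padZero_mul, padZero_mul,
      Ohat_mul_self, neg_one_mul, padZero_neg, Matrix.mul_neg, Matrix.neg_mul]
  -- `hlog` is stated with `padZero` unfolded, so it is already a statement about `B`.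
  have hHB : H = (I * c) • B := eq_I_mul_div_smul_of_neg_I_mul_smul_eq hT.ne' hlog
  have hH3 : H * H * H = ((c : ℂ) ^ 2) • H := hHB ▸ I_mul_smul_cube hB3 c
  have htr : H.trace = 0 := by
    rw [hHB, trace_smul, trace_mul_mul_conjTranspose hVV, trace_padZero, trace_Ohat, smul_zero]
  have hH0 : H ≠ 0 := by
    rw [hHB]
    refine smul_ne_zero ?_ <|
      mul_mul_conjTranspose_ne_zero hVV (padZero_ne_zero _ (Ohat_ne_zero θ))
    simp [hc, Real.pi_ne_zero, hT.ne']
  have hc0 : 0 ≤ c := by positivity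
  rw [hH.iSup_eigenvalues_sub_iInf_eigenvalues_of_mul_self_mul_self_eq_smul hc0 hH3 htr hH0, hc]
  ring
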